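/- Core inequality of Theorem 5.1 (interpolation for cake cutting): Fix a profile (f_1,…,f_n) of piecewise constant value density functions and a piecewise constant misreport f_1'. Let A be an MNW allocation with respect to (f_1,…,f_n) and A' an MNW allocation with respect to (f_1', f_2,…,f_n). Then for every c ∈ [0,1], v_1(A_1') · (∏_{j=2}^n v_j(A_j'))^c ≤ 2^{1−c} · v_1(A_1) · (∏_{j=2}^n v_j(A_j))^c, where v_1 is measured with respect to the true density f_1. (This inequality shows that the variant of the PA mechanism with fractions y_i = ((∏_{j≠i} v_j(A_j))/(∏_{j≠i} v_j(A^i_j)))^c has incentive ratio at most 2^{1−c} and is e^{−c}-MNW.) -/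

import Mathlib

open MeasureTheory Set

noncomputable def cakeval (f : ℝ → ℝ) (S : Set ℝ) : ℝ := ∫ x in S, f x

def PiecewiseConstant (f : ℝ → ℝ) : Prop :=
  ∃ (m : ℕ) (a : Fin (m + 1) → ℝ) (c : Fin m → ℝ),
    a 0 = 0 ∧ a (Fin.last m) = 1 ∧ Monotone a ∧
    ∀ t : Fin m, ∀ x ∈ Set.Ico (a t.castSucc) (a t.succ), f x = c t

def ValidDensity (f : ℝ → ℝ) : Prop :=
  PiecewiseConstant f ∧ (∀ x, 0 ≤ f x) ∧ 0 < cakeval f (Set.Icc 0 1)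

def FinUnionIcc (S : Set ℝ) : Prop :=
  ∃ (k : ℕ) (a b : Fin k → ℝ), S = ⋃ j, Set.Icc (a j) (b j)

def IsAllocOn {n : ℕ} (C : Set ℝ) (A : Fin n → Set ℝ) : Prop :=
  (∀ i, A i ⊆ C) ∧ (∀ i, FinUnionIcc (A i)) ∧
    Pairwise fun i j => volume (A i ∩ A j) = 0

def IsAlloc {n : ℕ} (A : Fin n → Set ℝ) : Prop := IsAllocOn (Set.Icc 0 1) A

def CompleteAlloc {n : ℕ} (A : Fin n → Set ℝ) : Prop := (⋃ i, A i) = Set.Icc (0 : ℝ) 1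

noncomputable def nashProd {n : ℕ} (f : Fin n → ℝ → ℝ) (A : Fin n → Set ℝ) : ℝ :=
  ∏ i, cakeval (f i) (A i)

def IsMNWOn {n : ℕ} (C : Set ℝ) (f : Fin n → ℝ → ℝ) (A : Fin n → Set ℝ) : Prop :=
  IsAllocOn C A ∧ ∀ B : Fin n → Set ℝ, IsAllocOn C B → nashProd f B ≤ nashProd f A

def IsMNW {n : ℕ} (f : Fin n → ℝ → ℝ) (A : Fin n → Set ℝ) : Prop :=
  IsMNWOn (Set.Icc 0 1) f A

def IsCompleteMNW {n : ℕ} (f : Fin n → ℝ → ℝ) (A : Fin n → Set ℝ) : Prop :=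
  IsAlloc A ∧ CompleteAlloc A ∧
    ∀ B : Fin n → Set ℝ, IsAlloc B → CompleteAlloc B → nashProd f B ≤ nashProd f A

/-!
All densities are constant on the cells of one finite partition of `[0, 1)` into intervals, and
the value of a piece depends only on how much of each cell it contains. Cutting every cell into
consecutive intervals of prescribed lengths therefore realizes any convex combination of two
allocations `A` and `B`. Since `θ ↦ ∏ᵢ ((1 - θ) vᵢ(Aᵢ) + θ vᵢ(Bᵢ))` is maximal at `θ = 0` when
`A` is MNW, its derivative there is `≤ 0`, that is `∑ᵢ vᵢ(Bᵢ) / vᵢ(Aᵢ) ≤ n + 1`.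
Applying this to `(A, A')` under the true profile and to `(A', A)` under the misreported one,
`x + 1 / x ≥ 2` for the agents `j ≥ 2` leaves `v₁(A'₁) ≤ 2 v₁(A₁)`. Writing `P, P'` for the
products over `j ≥ 2`, optimality of `A` gives `v₁(A'₁) P' ≤ v₁(A₁) P`, and then
`v₁(A'₁) P'^c = v₁(A'₁)^(1-c) (v₁(A'₁) P')^c ≤ (2 v₁(A₁))^(1-c) (v₁(A₁) P)^c`.
-/

lemma sum_nonpos_of_prod_one_add_mul_le_one {ι : Type*} [Fintype ι] {x : ι → ℝ}
    (h : ∀ θ ∈ Ioo (0 : ℝ) 1, ∏ i, (1 + θ * x i) ≤ 1) : ∑ i, x i ≤ 0 := by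
  classical
  have hderiv : HasDerivAt (fun θ => ∏ i, (1 + θ * x i)) (∑ i, x i) 0 := by
    simpa using HasDerivAt.fun_finsetProd (u := Finset.univ) (x := 0)
      fun i _ => ((hasDerivAt_id 0).mul_const (x i)).const_add 1
  refine le_of_tendsto hderiv.tendsto_slope_zero_right ?_
  filter_upwards [Ioo_mem_nhdsGT (zero_lt_one' ℝ)] with θ hθ
  simpa using mul_nonpos_of_nonneg_of_nonpos (inv_nonneg.2 hθ.1.le) (sub_nonpos.2 (h θ hθ))

lemma sum_div_le_card_of_prod_le {ι : Type*} [Fintype ι] {a b : ι → ℝ} (ha : ∀ i, 0 < a i)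
    (h : ∀ θ ∈ Ioo (0 : ℝ) 1, ∏ i, ((1 - θ) * a i + θ * b i) ≤ ∏ i, a i) :
    ∑ i, b i / a i ≤ Fintype.card ι := by
  have hprod : ∀ θ, ∏ i, ((1 - θ) * a i + θ * b i) = (∏ i, a i) * ∏ i, (1 + θ * (b i / a i - 1)) :=
    fun θ => by
      rw [← Finset.prod_mul_distrib]
      exact Finset.prod_congr rfl fun i _ => by field_simp [(ha i).ne']; ring
  have hpos : 0 < ∏ i, a i := Finset.prod_pos fun i _ => ha i
  have hsum := sum_nonpos_of_prod_one_add_mul_le_one fun θ hθ =>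
    (mul_le_iff_le_one_right hpos).1 ((hprod θ).symm.le.trans (h θ hθ))
  simpa [Finset.sum_sub_distrib] using hsum

lemma le_two_mul_of_sum_div_le_card {ι : Type*} [Fintype ι] [DecidableEq ι] (i₀ : ι)
    {a b : ι → ℝ} (ha : ∀ i, 0 < a i) (hb : ∀ i ≠ i₀, 0 < b i)
    (hab : ∑ i, b i / a i ≤ Fintype.card ι)
    (hba : ∑ i ∈ Finset.univ.erase i₀, a i / b i ≤ Fintype.card ι) : b i₀ ≤ 2 * a i₀ := by
  have hamgm : ∀ i ∈ Finset.univ.erase i₀, 2 - a i / b i ≤ b i / a i := fun i hi => by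
    have hai := ha i
    have hbi := hb i (Finset.ne_of_mem_erase hi)
    rw [sub_le_iff_le_add, div_add_div _ _ hai.ne' hbi.ne', le_div_iff₀ (mul_pos hai hbi)]
    nlinarith [sq_nonneg (a i - b i)]
  have hcard : ((Finset.univ.erase i₀).card : ℝ) = Fintype.card ι - 1 := by
    rw [Finset.card_erase_of_mem (Finset.mem_univ _), Finset.card_univ,
      Nat.cast_sub (Fintype.card_pos_iff.2 ⟨i₀⟩), Nat.cast_one]
  have hsum := Finset.sum_le_sum hamgm
  rw [Finset.sum_sub_distrib, Finset.sum_const, nsmul_eq_mul, hcard] at hsum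
  rw [← Finset.add_sum_erase _ _ (Finset.mem_univ i₀)] at hab
  have hratio : b i₀ / a i₀ ≤ 2 := by linarith
  linarith [(div_le_iff₀ (ha i₀)).1 hratio]

lemma mul_rpow_le_two_rpow_mul {u v P P' c : ℝ} (hu : 0 ≤ u) (huv : u ≤ 2 * v) (hP : 0 ≤ P)
    (hP' : 0 ≤ P') (h : u * P' ≤ v * P) (hc0 : 0 ≤ c) (hc1 : c ≤ 1) :
    u * P' ^ c ≤ 2 ^ (1 - c) * (v * P ^ c) := by
  have hv : 0 ≤ v := by linarith
  calc u * P' ^ c = u ^ (1 - c) * (u * P') ^ c := by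
        rw [Real.mul_rpow hu hP', ← mul_assoc, ← Real.rpow_add' hu (by norm_num), sub_add_cancel,
          Real.rpow_one]
    _ ≤ (2 * v) ^ (1 - c) * (v * P) ^ c :=
        mul_le_mul (Real.rpow_le_rpow hu huv (by linarith))
          (Real.rpow_le_rpow (mul_nonneg hu hP') h hc0) (by positivity) (by positivity)
    _ = 2 ^ (1 - c) * (v * P ^ c) := by
        rw [Real.mul_rpow zero_le_two hv, Real.mul_rpow hv hP, mul_assoc, ← mul_assoc (v ^ (1 - c)),
          ← Real.rpow_add' hv (by norm_num), sub_add_cancel, Real.rpow_one]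

/-- The pairs `p ∈ P` encode the cells `Ico p.1 p.2`, which partition `[0, 1)`. -/
structure IsIcoPartition (P : Finset (ℝ × ℝ)) : Prop where
  bounds : ∀ p ∈ P, 0 ≤ p.1 ∧ p.1 ≤ p.2 ∧ p.2 ≤ 1
  pairwiseDisjoint : (P : Set (ℝ × ℝ)).PairwiseDisjoint fun p => Ico p.1 p.2
  subset_biUnion : Ico 0 1 ⊆ ⋃ p ∈ P, Ico p.1 p.2

def ConstantOnCells (P : Finset (ℝ × ℝ)) (h : ℝ → ℝ) : Prop :=
  ∀ p ∈ P, ∀ x ∈ Ico p.1 p.2, h x = h p.1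

lemma disjoint_Ico_Ico_of_le {a b c d : ℝ} (h : b ≤ c) : Disjoint (Ico a b) (Ico c d) :=
  Ico_disjoint_Ico_same.mono_right (Ico_subset_Ico_left h)

lemma isIcoPartition_singleton : IsIcoPartition {(0, 1)} where
  bounds := by simp
  pairwiseDisjoint := by simp
  subset_biUnion := by simp

lemma exists_mem_Ico_castSucc_succ {m : ℕ} {a : Fin (m + 1) → ℝ} (h0 : a 0 = 0)
    (h1 : a (Fin.last m) = 1) {x : ℝ} (hx : x ∈ Ico (0 : ℝ) 1) :
    ∃ t : Fin m, x ∈ Ico (a t.castSucc) (a t.succ) := by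
  obtain ⟨j, hj, hmin⟩ := wellFounded_lt.has_min {j | x < a j} ⟨Fin.last m, by simp [h1, hx.2]⟩
  have hj0 : j ≠ 0 := by rintro rfl; exact hx.1.not_gt (h0 ▸ hj)
  obtain ⟨t, rfl⟩ := Fin.exists_succ_eq.2 hj0
  exact ⟨t, not_lt.1 fun h => hmin _ h (Fin.castSucc_lt_succ ..), hj⟩

lemma isIcoPartition_of_monotone {m : ℕ} {a : Fin (m + 1) → ℝ} (ha : Monotone a)
    (h0 : a 0 = 0) (h1 : a (Fin.last m) = 1) :
    IsIcoPartition (Finset.univ.image fun t : Fin m => (a t.castSucc, a t.succ)) where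
  bounds := by
    simp only [Finset.mem_image, Finset.mem_univ, true_and, forall_exists_index,
      forall_apply_eq_imp_iff]
    exact fun t => ⟨h0 ▸ ha (Fin.zero_le _), ha (Fin.castSucc_le_succ t), h1 ▸ ha (Fin.le_last _)⟩
  pairwiseDisjoint := by
    simp only [Finset.coe_image, Finset.coe_univ, image_univ]
    rintro _ ⟨t, rfl⟩ _ ⟨t', rfl⟩ hne
    rcases lt_or_gt_of_ne (fun htt' : t = t' => hne (htt' ▸ rfl)) with h | h
    · exact disjoint_Ico_Ico_of_le (ha (Fin.succ_le_castSucc_iff.2 h))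
    · exact (disjoint_Ico_Ico_of_le (ha (Fin.succ_le_castSucc_iff.2 h))).symm
  subset_biUnion x hx := by
    obtain ⟨t, ht⟩ := exists_mem_Ico_castSucc_succ h0 h1 hx
    exact mem_biUnion (Finset.mem_image_of_mem _ (Finset.mem_univ t)) ht

lemma PiecewiseConstant.exists_isIcoPartition {f : ℝ → ℝ} (hf : PiecewiseConstant f) :
    ∃ P, IsIcoPartition P ∧ ConstantOnCells P f := by
  obtain ⟨m, a, c, h0, h1, ha, hc⟩ := hf
  refine ⟨_, isIcoPartition_of_monotone ha h0 h1, ?_⟩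
  simp only [ConstantOnCells, Finset.mem_image, Finset.mem_univ, true_and, forall_exists_index,
    forall_apply_eq_imp_iff]
  exact fun t x hx => (hc t x hx).trans (hc t _ ⟨le_rfl, hx.1.trans_lt hx.2⟩).symm

lemma ConstantOnCells.mono {P Q : Finset (ℝ × ℝ)} {h : ℝ → ℝ} (hP : ConstantOnCells P h)
    (hQP : ∀ q ∈ Q, ∃ p ∈ P, Ico q.1 q.2 ⊆ Ico p.1 p.2) : ConstantOnCells Q h := by
  intro q hq x hx
  obtain ⟨p, hp, hsub⟩ := hQP q hq
  exact (hP p hp x (hsub hx)).trans (hP p hp q.1 (hsub ⟨le_rfl, hx.1.trans_lt hx.2⟩)).symm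

noncomputable def commonRefinement (P Q : Finset (ℝ × ℝ)) : Finset (ℝ × ℝ) :=
  ((P ×ˢ Q).image fun pq => (max pq.1.1 pq.2.1, min pq.1.2 pq.2.2)).filter fun r => r.1 ≤ r.2

lemma mem_commonRefinement {P Q : Finset (ℝ × ℝ)} {r : ℝ × ℝ} :
    r ∈ commonRefinement P Q ↔
      r.1 ≤ r.2 ∧ ∃ p ∈ P, ∃ q ∈ Q, (max p.1 q.1, min p.2 q.2) = r := by
  simp [commonRefinement, and_comm, and_assoc]

lemma IsIcoPartition.commonRefinement {P Q : Finset (ℝ × ℝ)} (hP : IsIcoPartition P)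
    (hQ : IsIcoPartition Q) : IsIcoPartition (commonRefinement P Q) where
  bounds r hr := by
    obtain ⟨hle, p, hp, q, hq, rfl⟩ := mem_commonRefinement.1 hr
    exact ⟨le_max_of_le_left (hP.bounds p hp).1, hle, min_le_of_left_le (hP.bounds p hp).2.2⟩
  pairwiseDisjoint r hr r' hr' hne := by
    obtain ⟨-, p, hp, q, hq, rfl⟩ := mem_commonRefinement.1 hr
    obtain ⟨-, p', hp', q', hq', rfl⟩ := mem_commonRefinement.1 hr'
    simp only [Function.onFun, ← Ico_inter_Ico]
    by_cases hpp : p = p'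
    · subst hpp
      exact ((hQ.pairwiseDisjoint hq hq' fun h => hne (h ▸ rfl)).mono inter_subset_right
        inter_subset_right)
    · exact (hP.pairwiseDisjoint hp hp' hpp).mono inter_subset_left inter_subset_left
  subset_biUnion x hx := by
    obtain ⟨p, hp, hxp⟩ := mem_iUnion₂.1 (hP.subset_biUnion hx)
    obtain ⟨q, hq, hxq⟩ := mem_iUnion₂.1 (hQ.subset_biUnion hx)
    have hx' : x ∈ Ico (max p.1 q.1) (min p.2 q.2) := by rw [← Ico_inter_Ico]; exact ⟨hxp, hxq⟩
    exact mem_biUnion (mem_commonRefinement.2 ⟨hx'.1.trans hx'.2.le, p, hp, q, hq, rfl⟩) hx'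

lemma ConstantOnCells.commonRefinement_left {P Q : Finset (ℝ × ℝ)} {h : ℝ → ℝ}
    (hP : ConstantOnCells P h) : ConstantOnCells (commonRefinement P Q) h :=
  hP.mono fun r hr => by
    obtain ⟨-, p, hp, q, -, rfl⟩ := mem_commonRefinement.1 hr
    exact ⟨p, hp, Ico_subset_Ico (le_max_left _ _) (min_le_left _ _)⟩

lemma ConstantOnCells.commonRefinement_right {P Q : Finset (ℝ × ℝ)} {h : ℝ → ℝ}
    (hQ : ConstantOnCells Q h) : ConstantOnCells (commonRefinement P Q) h :=
  hQ.mono fun r hr => by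
    obtain ⟨-, p, -, q, hq, rfl⟩ := mem_commonRefinement.1 hr
    exact ⟨q, hq, Ico_subset_Ico (le_max_right _ _) (min_le_right _ _)⟩

lemma exists_isIcoPartition_constantOnCells (s : Finset (ℝ → ℝ))
    (hs : ∀ h ∈ s, PiecewiseConstant h) :
    ∃ P, IsIcoPartition P ∧ ∀ h ∈ s, ConstantOnCells P h := by
  classical
  induction s using Finset.induction_on with
  | empty => exact ⟨_, isIcoPartition_singleton, by simp⟩
  | insert h s _ ih =>
    rw [Finset.forall_mem_insert] at hs
    obtain ⟨P, hP, hPs⟩ := ih hs.2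
    obtain ⟨Q, hQ, hQh⟩ := hs.1.exists_isIcoPartition
    refine ⟨commonRefinement P Q, hP.commonRefinement hQ, ?_⟩
    rw [Finset.forall_mem_insert]
    exact ⟨hQh.commonRefinement_right, fun g hg => (hPs g hg).commonRefinement_left⟩

lemma IsIcoPartition.biUnion_eq {P : Finset (ℝ × ℝ)} (hP : IsIcoPartition P) :
    ⋃ p ∈ P, Ico p.1 p.2 = Ico 0 1 :=
  (iUnion₂_subset fun p hp =>
    Ico_subset_Ico (hP.bounds p hp).1 (hP.bounds p hp).2.2).antisymm hP.subset_biUnion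

lemma FinUnionIcc.measurableSet {S : Set ℝ} (h : FinUnionIcc S) : MeasurableSet S := by
  obtain ⟨k, a, b, rfl⟩ := h
  exact MeasurableSet.iUnion fun j => measurableSet_Icc

lemma finUnionIcc_biUnion {α : Type*} (s : Finset α) (a b : α → ℝ) :
    FinUnionIcc (⋃ x ∈ s, Icc (a x) (b x)) := by
  refine ⟨s.card, fun j => a (s.equivFin.symm j), fun j => b (s.equivFin.symm j), ?_⟩
  ext x
  simp only [mem_iUnion]
  constructor
  · rintro ⟨y, hy, hx⟩
    exact ⟨s.equivFin ⟨y, hy⟩, by simpa using hx⟩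
  · rintro ⟨j, hx⟩
    exact ⟨_, (s.equivFin.symm j).2, hx⟩

lemma ValidDensity.cakeval_nonneg {f : ℝ → ℝ} (hf : ValidDensity f) {S : Set ℝ}
    (hS : FinUnionIcc S) : 0 ≤ cakeval f S :=
  setIntegral_nonneg hS.measurableSet fun x _ => hf.2.1 x

lemma volume_Icc_inter_Icc_eq_zero {a b c d : ℝ} (h : Disjoint (Ico a b) (Ico c d)) :
    volume (Icc a b ∩ Icc c d) = 0 := by
  rw [← measure_congr (Ico_ae_eq_Icc.inter Ico_ae_eq_Icc), h.inter_eq, measure_empty]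

lemma IsAllocOn.sum_measureReal_inter_le {N : ℕ} {C : Set ℝ} {A : Fin N → Set ℝ}
    (hA : IsAllocOn C A) {T : Set ℝ} (hT : MeasurableSet T) (hTfin : volume T ≠ ⊤) :
    ∑ i, volume.real (A i ∩ T) ≤ volume.real T := by
  have hdisj : Pairwise fun i j => AEDisjoint volume (A i ∩ T) (A j ∩ T) := fun i j hij =>
    measure_mono_null (inter_subset_inter inter_subset_left inter_subset_left) (hA.2.2 hij)
  calc ∑ i, volume.real (A i ∩ T) = volume.real (⋃ i ∈ Finset.univ, A i ∩ T) :=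
        (measureReal_biUnion_finset₀ (fun i _ j _ hij => hdisj hij)
          (fun i _ => ((hA.2.1 i).measurableSet.inter hT).nullMeasurableSet)
          fun i _ => measure_ne_top_of_subset inter_subset_right hTfin).symm
    _ ≤ volume.real T := measureReal_mono (iUnion₂_subset fun i _ => inter_subset_right) hTfin

lemma cakeval_eq_sum {P : Finset (ℝ × ℝ)} {h : ℝ → ℝ} (hP : IsIcoPartition P)
    (hh : ConstantOnCells P h) {S : Set ℝ} (hS : MeasurableSet S) (hS1 : S ⊆ Icc 0 1) :
    cakeval h S = ∑ p ∈ P, h p.1 * volume.real (S ∩ Ico p.1 p.2) := by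
  have hSae : S =ᵐ[volume] ⋃ p ∈ P, S ∩ Ico p.1 p.2 := by
    rw [← inter_iUnion₂, hP.biUnion_eq]
    nth_rewrite 1 [← inter_eq_left.2 hS1]
    exact (Filter.EventuallyEq.rfl.inter Ico_ae_eq_Icc).symm
  have hcell : ∀ p ∈ P, ∫ x in S ∩ Ico p.1 p.2, h x = h p.1 * volume.real (S ∩ Ico p.1 p.2) := by
    intro p hp
    rw [setIntegral_congr_fun (hS.inter measurableSet_Ico) fun x hx => hh p hp x hx.2,
      setIntegral_const, smul_eq_mul, mul_comm]
  rw [cakeval, setIntegral_congr_set hSae, integral_biUnion_finset _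
    (fun p _ => hS.inter measurableSet_Ico)
    fun p hp q hq hpq =>
      (hP.pairwiseDisjoint hp hq hpq).mono inter_subset_right inter_subset_right]
  · exact Finset.sum_congr rfl hcell
  · intro p hp
    refine (integrableOn_const ?_).congr_fun (fun x hx => (hh p hp x hx.2).symm)
      (hS.inter measurableSet_Ico)
    exact measure_ne_top_of_subset inter_subset_right measure_Ico_lt_top.ne

lemma disjoint_Ico_sum_Iio_sum_Iic {N : ℕ} {γ : Fin N → ℝ} (hγ : ∀ j, 0 ≤ γ j) (l : ℝ)
    {i j : Fin N} (hij : i ≠ j) :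
    Disjoint (Ico (l + ∑ k ∈ Finset.Iio i, γ k) (l + ∑ k ∈ Finset.Iic i, γ k))
      (Ico (l + ∑ k ∈ Finset.Iio j, γ k) (l + ∑ k ∈ Finset.Iic j, γ k)) := by
  have key : ∀ {i j : Fin N}, i < j → ∑ k ∈ Finset.Iic i, γ k ≤ ∑ k ∈ Finset.Iio j, γ k :=
    fun hlt => Finset.sum_le_sum_of_subset_of_nonneg
      (fun k hk => Finset.mem_Iio.2 ((Finset.mem_Iic.1 hk).trans_lt hlt)) fun k _ _ => hγ k
  rcases lt_or_gt_of_ne hij with h | h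
  · exact disjoint_Ico_Ico_of_le (by linarith [key h])
  · exact (disjoint_Ico_Ico_of_le (by linarith [key h])).symm

lemma volume_biUnion_Icc_inter_Ico {P : Finset (ℝ × ℝ)}
    (hP : (P : Set (ℝ × ℝ)).PairwiseDisjoint fun p => Ico p.1 p.2) {lo hi : ℝ × ℝ → ℝ}
    (hsub : ∀ p ∈ P, p.1 ≤ lo p ∧ hi p ≤ p.2) {q : ℝ × ℝ} (hq : q ∈ P) :
    volume ((⋃ p ∈ P, Icc (lo p) (hi p)) ∩ Ico q.1 q.2) = volume (Icc (lo q) (hi q)) := by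
  have hother : volume (⋃ p ∈ P.erase q, Icc (lo p) (hi p) ∩ Ico q.1 q.2) = 0 :=
    measure_biUnion_null_iff (P.erase q).countable_toSet |>.2 fun p hp =>
      have hp' := Finset.mem_of_mem_erase hp
      measure_mono_null (inter_subset_inter_right _ Ico_subset_Icc_self)
        (volume_Icc_inter_Icc_eq_zero ((hP hp' hq (Finset.ne_of_mem_erase hp)).mono_left
          (Ico_subset_Ico (hsub p hp').1 (hsub p hp').2)))
  have hsplit : (⋃ p ∈ P, Icc (lo p) (hi p)) ∩ Ico q.1 q.2 ⊆
      Icc (lo q) (hi q) ∪ ⋃ p ∈ P.erase q, Icc (lo p) (hi p) ∩ Ico q.1 q.2 := by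
    rintro x ⟨hx, hxq⟩
    obtain ⟨p, hp, hxp⟩ := mem_iUnion₂.1 hx
    by_cases hpq : p = q
    · exact Or.inl (hpq ▸ hxp)
    · exact Or.inr (mem_biUnion (Finset.mem_erase.2 ⟨hpq, hp⟩) ⟨hxp, hxq⟩)
  refine le_antisymm ((measure_mono hsplit).trans ((measure_union_le _ _).trans
    (by rw [hother, add_zero]))) ?_
  rw [← measure_congr Ico_ae_eq_Icc]
  exact measure_mono fun x hx => ⟨mem_biUnion hq (Ico_subset_Icc_self hx),
    Ico_subset_Ico (hsub q hq).1 (hsub q hq).2 hx⟩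

lemma exists_isAlloc_measureReal_inter_eq {N : ℕ} {P : Finset (ℝ × ℝ)} (hP : IsIcoPartition P)
    (γ : ℝ × ℝ → Fin N → ℝ) (hγ : ∀ p ∈ P, ∀ i, 0 ≤ γ p i)
    (hrow : ∀ p ∈ P, ∑ i, γ p i ≤ p.2 - p.1) :
    ∃ C : Fin N → Set ℝ, IsAlloc C ∧ ∀ i, ∀ p ∈ P, volume.real (C i ∩ Ico p.1 p.2) = γ p i := by
  set lo : ℝ × ℝ → Fin N → ℝ := fun p i => p.1 + ∑ j ∈ Finset.Iio i, γ p j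
  set hi : ℝ × ℝ → Fin N → ℝ := fun p i => p.1 + ∑ j ∈ Finset.Iic i, γ p j
  have hlen : ∀ p i, hi p i - lo p i = γ p i := fun p i => by
    simp only [hi, lo, ← Finset.sum_Iio_add_eq_sum_Iic]; ring
  have hbounds : ∀ i, ∀ p ∈ P, p.1 ≤ lo p i ∧ hi p i ≤ p.2 := fun i p hp =>
    ⟨le_add_of_nonneg_right (Finset.sum_nonneg fun j _ => hγ p hp j),
      by linarith [hrow p hp, Finset.sum_le_sum_of_subset_of_nonneg (Finset.subset_univ
        (Finset.Iic i)) fun j _ _ => hγ p hp j]⟩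
  have hdisj : ∀ p ∈ P, ∀ q ∈ P, ∀ i j, i ≠ j →
      Disjoint (Ico (lo p i) (hi p i)) (Ico (lo q j) (hi q j)) := by
    intro p hp q hq i j hij
    by_cases hpq : p = q
    · subst hpq
      exact disjoint_Ico_sum_Iio_sum_Iic (hγ p hp) p.1 hij
    · exact (hP.pairwiseDisjoint hp hq hpq).mono
        (Ico_subset_Ico (hbounds i p hp).1 (hbounds i p hp).2)
        (Ico_subset_Ico (hbounds j q hq).1 (hbounds j q hq).2)
  refine ⟨fun i => ⋃ p ∈ P, Icc (lo p i) (hi p i),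
    ⟨fun i => iUnion₂_subset fun p hp => Icc_subset_Icc ((hP.bounds p hp).1.trans
      (hbounds i p hp).1) ((hbounds i p hp).2.trans (hP.bounds p hp).2.2),
    fun i => finUnionIcc_biUnion _ _ _, fun i j hij => ?_⟩, fun i q hq => ?_⟩
  · change volume ((⋃ p ∈ P, _) ∩ (⋃ q ∈ P, _)) = 0
    simp only [iUnion₂_inter, inter_iUnion₂]
    exact measure_biUnion_null_iff P.countable_toSet |>.2 fun p hp =>
      measure_biUnion_null_iff P.countable_toSet |>.2 fun q hq =>
        volume_Icc_inter_Icc_eq_zero (hdisj q hq p hp i j hij)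
  · rw [measureReal_def, volume_biUnion_Icc_inter_Ico hP.pairwiseDisjoint (hbounds i) hq,
      Real.volume_Icc, hlen, ENNReal.toReal_ofReal (hγ q hq i)]

lemma IsIcoPartition.exists_isAlloc_cakeval_eq_convex_comb {N : ℕ} {P : Finset (ℝ × ℝ)}
    (hP : IsIcoPartition P) {A B : Fin N → Set ℝ} (hA : IsAlloc A) (hB : IsAlloc B) {θ : ℝ}
    (hθ : θ ∈ Icc (0 : ℝ) 1) :
    ∃ C : Fin N → Set ℝ, IsAlloc C ∧ ∀ h, ConstantOnCells P h →
      ∀ i, cakeval h (C i) = (1 - θ) * cakeval h (A i) + θ * cakeval h (B i) := by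
  obtain ⟨C, hC, hCvol⟩ := exists_isAlloc_measureReal_inter_eq hP
    (fun p i => (1 - θ) * volume.real (A i ∩ Ico p.1 p.2) + θ * volume.real (B i ∩ Ico p.1 p.2))
    (fun p _ i => add_nonneg (mul_nonneg (sub_nonneg.2 hθ.2) measureReal_nonneg)
      (mul_nonneg hθ.1 measureReal_nonneg))
    (fun p hp => by
      have hA' := hA.sum_measureReal_inter_le (T := Ico p.1 p.2) measurableSet_Ico
        measure_Ico_lt_top.ne
      have hB' := hB.sum_measureReal_inter_le (T := Ico p.1 p.2) measurableSet_Ico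
        measure_Ico_lt_top.ne
      rw [Real.volume_real_Ico_of_le (hP.bounds p hp).2.1] at hA' hB'
      rw [Finset.sum_add_distrib, ← Finset.mul_sum, ← Finset.mul_sum]
      nlinarith [hθ.1, hθ.2])
  refine ⟨C, hC, fun h hh i => ?_⟩
  have hval : ∀ {S}, FinUnionIcc S → S ⊆ Icc 0 1 → cakeval h S = _ :=
    fun hS hS1 => cakeval_eq_sum hP hh hS.measurableSet hS1
  rw [hval (hC.2.1 i) (hC.1 i), hval (hA.2.1 i) (hA.1 i), hval (hB.2.1 i) (hB.1 i),
    Finset.mul_sum, Finset.mul_sum, ← Finset.sum_add_distrib]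
  exact Finset.sum_congr rfl fun p hp => by rw [hCvol i p hp]; ring

lemma IsIcoPartition.exists_isAlloc_cakeval_eq_div {N : ℕ} {P : Finset (ℝ × ℝ)}
    (hP : IsIcoPartition P) :
    ∃ D : Fin N → Set ℝ, IsAlloc D ∧ ∀ h, ConstantOnCells P h →
      ∀ i, cakeval h (D i) = cakeval h (Icc 0 1) / N := by
  obtain ⟨D, hD, hDvol⟩ := exists_isAlloc_measureReal_inter_eq hP (fun p _ => (p.2 - p.1) / N)
    (fun p hp _ => div_nonneg (sub_nonneg.2 (hP.bounds p hp).2.1) N.cast_nonneg)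
    (fun p hp => by
      rw [Finset.sum_const, Finset.card_univ, Fintype.card_fin, nsmul_eq_mul]
      rcases eq_or_ne N 0 with rfl | hN
      · simpa using (hP.bounds p hp).2.1
      · rw [mul_div_cancel₀ _ (Nat.cast_ne_zero.2 hN)])
  refine ⟨D, hD, fun h hh i => ?_⟩
  rw [cakeval_eq_sum hP hh (hD.2.1 i).measurableSet (hD.1 i),
    cakeval_eq_sum hP hh measurableSet_Icc subset_rfl, Finset.sum_div]
  refine Finset.sum_congr rfl fun p hp => ?_
  rw [hDvol i p hp, inter_eq_right.2 (Ico_subset_Icc_self.trans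
    (Icc_subset_Icc (hP.bounds p hp).1 (hP.bounds p hp).2.2)),
    Real.volume_real_Ico_of_le (hP.bounds p hp).2.1, mul_div_assoc]

lemma IsMNW.cakeval_pos {N : ℕ} {F : Fin N → ℝ → ℝ} {A : Fin N → Set ℝ} (hA : IsMNW F A)
    (hF : ∀ i, ValidDensity (F i)) (i : Fin N) : 0 < cakeval (F i) (A i) := by
  classical
  obtain ⟨P, hP, hPF⟩ := exists_isIcoPartition_constantOnCells (Finset.univ.image F)
    (by simpa using fun j => (hF j).1)
  obtain ⟨D, hD, hDval⟩ := hP.exists_isAlloc_cakeval_eq_div (N := N)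
  have hDpos : 0 < nashProd F D := Finset.prod_pos fun j _ => by
    rw [hDval _ (hPF _ (Finset.mem_image_of_mem F (Finset.mem_univ j))) j]
    exact div_pos (hF j).2.2 (Nat.cast_pos.2 i.pos)
  have hApos : nashProd F A ≠ 0 := (hDpos.trans_le (hA.2 D hD)).ne'
  exact ((hF i).cakeval_nonneg (hA.1.2.1 i)).lt_of_ne
    (Finset.prod_ne_zero_iff.1 hApos i (Finset.mem_univ i)).symm

lemma IsMNW.sum_div_le_card {N : ℕ} {F : Fin N → ℝ → ℝ} {A B : Fin N → Set ℝ} (hA : IsMNW F A)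
    (hB : IsAlloc B) (hF : ∀ i, ValidDensity (F i)) :
    ∑ i, cakeval (F i) (B i) / cakeval (F i) (A i) ≤ N := by
  classical
  obtain ⟨P, hP, hPF⟩ := exists_isIcoPartition_constantOnCells (Finset.univ.image F)
    (by simpa using fun i => (hF i).1)
  simpa using sum_div_le_card_of_prod_le (hA.cakeval_pos hF) fun θ hθ => by
    obtain ⟨C, hC, hCval⟩ :=
      hP.exists_isAlloc_cakeval_eq_convex_comb hA.1 hB (Ioo_subset_Icc_self hθ)
    calc ∏ i, ((1 - θ) * cakeval (F i) (A i) + θ * cakeval (F i) (B i)) = nashProd F C :=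
          Finset.prod_congr rfl fun i _ =>
            (hCval _ (hPF _ (Finset.mem_image_of_mem F (Finset.mem_univ i))) i).symm
      _ ≤ nashProd F A := hA.2 C hC

/-- Core inequality of Theorem 5.1 (interpolation for cake cutting): if `A` is MNW
for the true profile and `A'` is MNW for the profile where agent 1 (index `0`)
misreports `f1'`, then for every `c ∈ [0,1]`,
`v_1(A_1') · (∏_{j≥2} v_j(A_j'))^c ≤ 2^{1−c} · v_1(A_1) · (∏_{j≥2} v_j(A_j))^c`. -/
theorem interpolation_core_inequality (n : ℕ) (f : Fin (n + 1) → ℝ → ℝ) (f1' : ℝ → ℝ)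
    (hf : ∀ i, ValidDensity (f i)) (hf1' : ValidDensity f1')
    (c : ℝ) (hc : c ∈ Set.Icc (0 : ℝ) 1)
    (A A' : Fin (n + 1) → Set ℝ)
    (hA : IsMNW f A) (hA' : IsMNW (Function.update f 0 f1') A') :
    cakeval (f 0) (A' 0) * (∏ j ∈ Finset.univ.erase 0, cakeval (f j) (A' j)) ^ c ≤
      (2 : ℝ) ^ (1 - c) *
        (cakeval (f 0) (A 0) * (∏ j ∈ Finset.univ.erase 0, cakeval (f j) (A j)) ^ c) := by
  set f' := Function.update f 0 f1'
  have hf'_of_ne : ∀ i ≠ 0, f' i = f i := fun i hi => Function.update_of_ne hi _ _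
  have hf' : ∀ i, ValidDensity (f' i) := fun i => by
    rcases eq_or_ne i 0 with rfl | hi
    · simpa [f'] using hf1'
    · exact hf'_of_ne i hi ▸ hf i
  have hv := hA.cakeval_pos hf
  have hw := hA'.cakeval_pos hf'
  have hu : cakeval (f 0) (A' 0) ≤ 2 * cakeval (f 0) (A 0) := by
    refine le_two_mul_of_sum_div_le_card 0 hv (fun i hi => hf'_of_ne i hi ▸ hw i) ?_ ?_
    · simpa using hA.sum_div_le_card hA'.1 hf
    calc ∑ i ∈ Finset.univ.erase 0, cakeval (f i) (A i) / cakeval (f i) (A' i)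
        = ∑ i ∈ Finset.univ.erase 0, cakeval (f' i) (A i) / cakeval (f' i) (A' i) :=
          Finset.sum_congr rfl fun i hi => by rw [hf'_of_ne i (Finset.ne_of_mem_erase hi)]
      _ ≤ ∑ i, cakeval (f' i) (A i) / cakeval (f' i) (A' i) :=
          Finset.sum_le_sum_of_subset_of_nonneg (Finset.erase_subset _ _) fun i _ _ =>
            div_nonneg ((hf' i).cakeval_nonneg (hA.1.2.1 i)) (hw i).le
      _ ≤ _ := by simpa using hA'.sum_div_le_card hA.1 hf'
  have hnash := hA.2 A' hA'.1
  rw [nashProd, nashProd, ← Finset.mul_prod_erase _ _ (Finset.mem_univ 0),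
    ← Finset.mul_prod_erase _ _ (Finset.mem_univ 0)] at hnash
  exact mul_rpow_le_two_rpow_mul ((hf 0).cakeval_nonneg (hA'.1.2.1 0)) hu
    (Finset.prod_nonneg fun i _ => (hv i).le)
    (Finset.prod_nonneg fun i _ => (hf i).cakeval_nonneg (hA'.1.2.1 i)) hnash hc.1 hc.2
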